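/- arXiv:2001.02335 — 7 statements merged into one kernel-verified Lean document; each statement's English description precedes it below -/
import Mathlib

section
/- Let A and M be n×n real symmetric positive definite matrices with MA = AM. Let g₀ ∈ ℝⁿ with g₀ ≠ 0, let α₀ ∈ ℝ be arbitrary, and set g₁ = (I − α₀A)g₀, α₁ = ⟨g₀, M g₀⟩/⟨g₀, M A g₀⟩, and g₂ = (I − α₁A)g₁. If q ∈ ℝⁿ satisfies (I − α₀A)q = g₀, then ⟨q, M g₂⟩ = 0. -/
/-!
The step operator `I - α₀ A` is self-adjoint for the inner product `⟨x, M y⟩`, because `A` is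
symmetric and commutes with `M`. Moving it from `g₁ = (I - α₀ A) g₀` onto `q` turns
`⟨q, M g₁⟩` and `⟨q, M A g₁⟩` into `⟨g₀, M g₀⟩` and `⟨g₀, M A g₀⟩`, whose quotient is exactly the
stepsize `α₁`; hence `⟨q, M g₂⟩ = ⟨g₀, M g₀⟩ - α₁ ⟨g₀, M A g₀⟩ = 0`. The denominator is positive
since the product of commuting positive definite matrices is positive definite.
-/

open Matrix
open scoped MatrixOrder ComplexOrder

namespace Matrix

variable {n R : Type*} [Fintype n]

theorem IsSymm.dotProduct_mulVec_comm [CommSemiring R] {A : Matrix n n R} (hA : A.IsSymm)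
    (x y : n → R) : x ⬝ᵥ (A *ᵥ y) = (A *ᵥ x) ⬝ᵥ y := by
  rw [dotProduct_mulVec, ← vecMul_transpose, hA.eq]

theorem IsSymm.dotProduct_mulVec_mulVec_of_commute [CommSemiring R] {A M : Matrix n n R}
    (hA : A.IsSymm) (hMA : Commute M A) (x y : n → R) :
    x ⬝ᵥ (M *ᵥ (A *ᵥ y)) = (A *ᵥ x) ⬝ᵥ (M *ᵥ y) := by
  rw [mulVec_mulVec, hMA.eq, ← mulVec_mulVec, hA.dotProduct_mulVec_comm]

theorem IsSymm.dotProduct_mulVec_sub_smul_mulVec [CommRing R] {A M : Matrix n n R}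
    (hA : A.IsSymm) (hMA : Commute M A) (α : R) (x y : n → R) :
    x ⬝ᵥ (M *ᵥ (y - α • (A *ᵥ y))) = (x - α • (A *ᵥ x)) ⬝ᵥ (M *ᵥ y) := by
  rw [mulVec_sub, mulVec_smul, dotProduct_sub, dotProduct_smul, sub_dotProduct, smul_dotProduct,
    hA.dotProduct_mulVec_mulVec_of_commute hMA]

theorem PosDef.mul_of_commute {𝕜 : Type*} [RCLike 𝕜] [DecidableEq n] {A B : Matrix n n 𝕜}
    (hA : A.PosDef) (hB : B.PosDef) (hAB : Commute A B) : (A * B).PosDef :=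
  ((hA.isStrictlyPositive.commute_iff hB.isStrictlyPositive).mp hAB).posDef

end Matrix

/-- Lemma 1 (orthogonal property): for symmetric positive definite commuting
matrices `A` and `M`, the gradient recursion with the (glstep1) stepsize
makes `q` (where `(I - α₀ A) q = g₀`) `M`-orthogonal to `g₂`. -/
theorem orthogonal_property {n : ℕ} (A M : Matrix (Fin n) (Fin n) ℝ)
    (hA : A.PosDef) (hM : M.PosDef) (hcomm : M * A = A * M)
    (g₀ : Fin n → ℝ) (hg₀ : g₀ ≠ 0) (α₀ : ℝ)
    (g₁ : Fin n → ℝ) (hg₁ : g₁ = g₀ - α₀ • (A *ᵥ g₀))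
    (α₁ : ℝ) (hα₁ : α₁ = (g₀ ⬝ᵥ (M *ᵥ g₀)) / (g₀ ⬝ᵥ (M *ᵥ (A *ᵥ g₀))))
    (g₂ : Fin n → ℝ) (hg₂ : g₂ = g₁ - α₁ • (A *ᵥ g₁))
    (q : Fin n → ℝ) (hq : q - α₀ • (A *ᵥ q) = g₀) :
    q ⬝ᵥ (M *ᵥ g₂) = 0 := by
  have hAsymm : A.IsSymm := isHermitian_iff_isSymm.mp hA.isHermitian
  have hMA : Commute M A := hcomm
  have hq_g₁ : q ⬝ᵥ (M *ᵥ g₁) = g₀ ⬝ᵥ (M *ᵥ g₀) := by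
    rw [hg₁, hAsymm.dotProduct_mulVec_sub_smul_mulVec hMA, hq]
  have hq_Ag₁ : q ⬝ᵥ (M *ᵥ (A *ᵥ g₁)) = g₀ ⬝ᵥ (M *ᵥ (A *ᵥ g₀)) := by
    rw [hg₁, mulVec_sub, mulVec_smul, hAsymm.dotProduct_mulVec_sub_smul_mulVec hMA, hq]
  have hden : 0 < g₀ ⬝ᵥ (M *ᵥ (A *ᵥ g₀)) := by
    simpa [mulVec_mulVec] using (hM.mul_of_commute hA hMA).dotProduct_mulVec_pos hg₀
  rw [hg₂, mulVec_sub, mulVec_smul, dotProduct_sub, dotProduct_smul, smul_eq_mul, hq_g₁, hq_Ag₁,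
    hα₁, div_mul_cancel₀ _ hden.ne', sub_self]
end

section
/- Let A be a 2×2 real symmetric positive definite matrix and let k₀ ≥ 2 be an integer. Let g : ℕ → ℝ² and α : ℕ → ℝ satisfy g_{j+1} = (I − α_j A)g_j for all j, with the BB1 stepsize α_j = ⟨g_{j-1}, g_{j-1}⟩/⟨g_{j-1}, A g_{j-1}⟩ for every j with 1 ≤ j ≤ k₀+2 and j ≠ k₀ (α₀ arbitrary). Suppose g_j ≠ 0 for all 0 ≤ j ≤ k₀+2, and let q ∈ ℝ², q ≠ 0, satisfy (I − α_{k₀-2} A)q = g_{k₀-2}. Set α_{k₀} = 2/( ⟨q,Aq⟩/‖q‖² + ⟨g_{k₀},Ag_{k₀}⟩/‖g_{k₀}‖² + √( (⟨q,Aq⟩/‖q‖² − ⟨g_{k₀},Ag_{k₀}⟩/‖g_{k₀}‖²)² + 4⟨q, A g_{k₀}⟩²/(‖q‖²·‖g_{k₀}‖²) ) ). Then g_{k₀+3} = 0. -/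
/-!
Write `k₀ = m + 2`. Since `I - α_m A` is symmetric, `(I - α_m A) q = g_m` gives
`⟨q, g_{m+1}⟩ = ‖g_m‖²` and `⟨q, A g_{m+1}⟩ = ⟨g_m, A g_m⟩`, so the BB1 step `α_{m+1}` makes `q`
orthogonal to `g_{m+2}`. In the orthogonal basis `q, g_{m+2}` of ℝ² the inserted stepsize is the
reciprocal of the larger eigenvalue of `A`, hence `det (I - α_{k₀} A) = 0`. By Cayley–Hamilton,
`g_{k₀+1} = (I - α_{k₀} A) g_{k₀}` is then an eigenvector of `A` for `μ = tr A - 1 / α_{k₀}`; a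
further gradient step keeps it one, and the BB1 step computed from `g_{k₀+1}` is `1 / μ`, which
annihilates it.
-/

open Matrix

variable {𝕜 : Type*}

namespace Matrix

section Field

variable [Field 𝕜] {n : Type*} [Fintype n]

def bb1Step (A : Matrix n n 𝕜) (x : n → 𝕜) : 𝕜 := (x ⬝ᵥ x) / (x ⬝ᵥ (A *ᵥ x))

theorem IsSymm.dotProduct_mulVec_eq {A : Matrix n n 𝕜} (hA : A.IsSymm) (x y : n → 𝕜) :
    x ⬝ᵥ (A *ᵥ y) = (A *ᵥ x) ⬝ᵥ y := by
  rw [dotProduct_mulVec, ← mulVec_transpose, hA.eq, dotProduct_comm]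

theorem IsSymm.dotProduct_sub_smul_mulVec {A : Matrix n n 𝕜} (hA : A.IsSymm) (a : 𝕜)
    (x y : n → 𝕜) : x ⬝ᵥ (y - a • (A *ᵥ y)) = (x - a • (A *ᵥ x)) ⬝ᵥ y := by
  rw [dotProduct_sub, sub_dotProduct, dotProduct_smul, smul_dotProduct, hA.dotProduct_mulVec_eq]

theorem IsSymm.dotProduct_sub_bb1Step_smul_eq_zero {A : Matrix n n 𝕜} (hA : A.IsSymm)
    {q x : n → 𝕜} {a : 𝕜} (hq : q - a • (A *ᵥ q) = x) (hx : x ⬝ᵥ (A *ᵥ x) ≠ 0) :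
    q ⬝ᵥ ((x - a • (A *ᵥ x)) - bb1Step A x • (A *ᵥ (x - a • (A *ᵥ x)))) = 0 := by
  have hqy : q ⬝ᵥ (x - a • (A *ᵥ x)) = x ⬝ᵥ x := by
    rw [hA.dotProduct_sub_smul_mulVec, hq]
  have hqAy : q ⬝ᵥ (A *ᵥ (x - a • (A *ᵥ x))) = x ⬝ᵥ (A *ᵥ x) := by
    rw [hA.dotProduct_mulVec_eq, hA.dotProduct_sub_smul_mulVec, ← mulVec_smul, ← mulVec_sub, hq,
      dotProduct_comm]
  rw [dotProduct_sub, dotProduct_smul, hqy, hqAy, smul_eq_mul, bb1Step, div_mul_cancel₀ _ hx,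
    sub_self]

theorem bb1Step_eq_inv_of_mulVec_eq_smul {A : Matrix n n 𝕜} {v : n → 𝕜} {μ : 𝕜}
    (hAv : A *ᵥ v = μ • v) (hv : v ⬝ᵥ v ≠ 0) : bb1Step A v = μ⁻¹ := by
  rw [bb1Step, hAv, dotProduct_smul, smul_eq_mul, div_mul_cancel_right₀ hv]

theorem sub_bb1Step_smul_eq_zero_of_mulVec_eq_smul {A : Matrix n n 𝕜} {v : n → 𝕜} {μ : 𝕜}
    (hAv : A *ᵥ v = μ • v) (hμ : μ ≠ 0) (hv : v ⬝ᵥ v ≠ 0) (β : 𝕜) :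
    (v - β • (A *ᵥ v)) - bb1Step A v • (A *ᵥ (v - β • (A *ᵥ v))) = 0 := by
  have hAw : A *ᵥ (v - β • (A *ᵥ v)) = μ • (v - β • (A *ᵥ v)) := by
    rw [mulVec_sub, mulVec_smul, hAv, mulVec_smul, hAv, smul_sub, smul_comm μ β]
  rw [hAw, bb1Step_eq_inv_of_mulVec_eq_smul hAv hv, smul_smul, inv_mul_cancel₀ hμ, one_smul,
    sub_self]

end Field

/-- `det (Pᵀ B P) = det P ^ 2 * det B` for the matrix `P` with columns `u`, `v`. -/
theorem dotProduct_mulVec_mul_sub_eq_det_mul_gram {R : Type*} [CommRing R]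
    (B : Matrix (Fin 2) (Fin 2) R) (u v : Fin 2 → R) :
    (u ⬝ᵥ (B *ᵥ u)) * (v ⬝ᵥ (B *ᵥ v)) - (u ⬝ᵥ (B *ᵥ v)) * (v ⬝ᵥ (B *ᵥ u)) =
      B.det * ((u ⬝ᵥ u) * (v ⬝ᵥ v) - (u ⬝ᵥ v) ^ 2) := by
  simp only [dotProduct, mulVec, Fin.sum_univ_two, det_fin_two]
  ring

theorem mulVec_sub_smul_mulVec_eq_smul_of_det_eq_zero [Field 𝕜]
    {A : Matrix (Fin 2) (Fin 2) 𝕜} {α : 𝕜} (hdet : (1 - α • A).det = 0) (v : Fin 2 → 𝕜) :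
    A *ᵥ (v - α • (A *ᵥ v)) = (A.trace - α⁻¹) • (v - α • (A *ᵥ v)) := by
  have hα : α ≠ 0 := by
    rintro rfl
    simp at hdet
  have hmat : A * (1 - α • A) = (A.trace - α⁻¹) • (1 - α • A) := by
    rw [det_fin_two] at hdet
    ext i j
    fin_cases i <;> fin_cases j <;>
      simp only [Fin.zero_eta, Fin.mk_one, Fin.isValue, mul_apply, sub_apply, smul_apply,
        smul_eq_mul, Fin.sum_univ_two, one_apply_eq, one_apply_ne, ne_eq, zero_ne_one, one_ne_zero,
        not_false_eq_true, zero_sub, mul_neg, trace_fin_two] at hdet ⊢ <;>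
      field_simp
    -- the diagonal entries differ by `det (1 - α • A) / α`, the off-diagonal ones agree
    · linear_combination hdet
    · ring
    · ring
    · linear_combination hdet
  have hv : v - α • (A *ᵥ v) = (1 - α • A) *ᵥ v := by
    rw [sub_mulVec, one_mulVec, smul_mulVec]
  rw [hv, mulVec_mulVec, hmat, smul_mulVec]

theorem IsSymm.det_one_sub_smul_eq_zero [Field 𝕜] {A : Matrix (Fin 2) (Fin 2) 𝕜}
    (hA : A.IsSymm) {u v : Fin 2 → 𝕜} (hu : u ⬝ᵥ u ≠ 0) (hv : v ⬝ᵥ v ≠ 0) (huv : u ⬝ᵥ v = 0)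
    {α : 𝕜} (hα : (1 - α * ((u ⬝ᵥ (A *ᵥ u)) / (u ⬝ᵥ u))) * (1 - α * ((v ⬝ᵥ (A *ᵥ v)) / (v ⬝ᵥ v))) =
      α ^ 2 * ((u ⬝ᵥ (A *ᵥ v)) ^ 2 / ((u ⬝ᵥ u) * (v ⬝ᵥ v)))) :
    (1 - α • A).det = 0 := by
  have hvu : v ⬝ᵥ (A *ᵥ u) = u ⬝ᵥ (A *ᵥ v) := by rw [hA.dotProduct_mulVec_eq, dotProduct_comm]
  have hgram := dotProduct_mulVec_mul_sub_eq_det_mul_gram (1 - α • A) u v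
  simp only [sub_mulVec, one_mulVec, smul_mulVec, dotProduct_sub, dotProduct_smul, smul_eq_mul,
    huv, dotProduct_comm v u, hvu] at hgram
  have : (1 - α • A).det * ((u ⬝ᵥ u) * (v ⬝ᵥ v)) = 0 := by
    field_simp at hα
    linear_combination -hgram + hα
  exact (mul_eq_zero.1 this).resolve_right (mul_ne_zero hu hv)

end Matrix

/-- `α⁻¹` is the larger root `λ` of `(λ - a) * (λ - b) = s`. -/
theorem one_sub_mul_mul_one_sub_mul_eq_of_eq_two_div {a b s α : ℝ} (hab : 0 < a + b)
    (hs : 0 ≤ s) (hα : α = 2 / (a + b + √((a - b) ^ 2 + 4 * s))) :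
    (1 - α * a) * (1 - α * b) = α ^ 2 * s := by
  set S := √((a - b) ^ 2 + 4 * s)
  have hS : S ^ 2 = (a - b) ^ 2 + 4 * s := Real.sq_sqrt (by positivity)
  have hden : a + b + S ≠ 0 := by positivity
  rw [hα]
  field_simp
  linear_combination hS

/-- Theorem 1 specialized to `Ψ(A) = I` (the BB1 method) with the inserted
stepsize `α̃_{k₀}^{BB1}` of (newsbb1): finite termination `g_{k₀+3} = 0`. -/
theorem finite_termination_BB1 {A : Matrix (Fin 2) (Fin 2) ℝ}
    (hA : A.PosDef) (k₀ : ℕ) (hk₀ : 2 ≤ k₀)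
    (g : ℕ → Fin 2 → ℝ) (α : ℕ → ℝ)
    (hrec : ∀ j, g (j + 1) = g j - α j • (A *ᵥ g j))
    (hstep : ∀ j, 1 ≤ j → j ≤ k₀ + 2 → j ≠ k₀ →
      α j = (g (j - 1) ⬝ᵥ g (j - 1)) / (g (j - 1) ⬝ᵥ (A *ᵥ g (j - 1))))
    (hgne : ∀ j, j ≤ k₀ + 2 → g j ≠ 0)
    (q : Fin 2 → ℝ) (hq0 : q ≠ 0)
    (hq : q - α (k₀ - 2) • (A *ᵥ q) = g (k₀ - 2))
    (hαk₀ : α k₀ = 2 /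
      ((q ⬝ᵥ (A *ᵥ q)) / (q ⬝ᵥ q) + (g k₀ ⬝ᵥ (A *ᵥ g k₀)) / (g k₀ ⬝ᵥ g k₀) +
        Real.sqrt (((q ⬝ᵥ (A *ᵥ q)) / (q ⬝ᵥ q) -
            (g k₀ ⬝ᵥ (A *ᵥ g k₀)) / (g k₀ ⬝ᵥ g k₀)) ^ 2 +
          4 * (q ⬝ᵥ (A *ᵥ g k₀)) ^ 2 / ((q ⬝ᵥ q) * (g k₀ ⬝ᵥ g k₀))))) :
    g (k₀ + 3) = 0 := by
  obtain ⟨m, rfl⟩ : ∃ m, k₀ = m + 2 := ⟨k₀ - 2, by omega⟩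
  have hsymm : A.IsSymm := by simpa using hA.isHermitian
  have hpos {x : Fin 2 → ℝ} (hx : x ≠ 0) : 0 < x ⬝ᵥ (A *ᵥ x) := by
    simpa using hA.dotProduct_mulVec_pos hx
  have hself {x : Fin 2 → ℝ} (hx : x ≠ 0) : 0 < x ⬝ᵥ x := by
    simpa using dotProduct_star_self_pos_iff.2 hx
  have hort : q ⬝ᵥ g (m + 2) = 0 := by
    rw [hrec (m + 1), hstep (m + 1) (by omega) (by omega) (by omega), hrec m]
    exact hsymm.dotProduct_sub_bb1Step_smul_eq_zero (by simpa using hq)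
      (hpos (hgne m (by omega))).ne'
  have hG := hgne (m + 2) (by omega)
  have hdet : (1 - α (m + 2) • A).det = 0 := by
    refine hsymm.det_one_sub_smul_eq_zero (hself hq0).ne' (hself hG).ne' hort ?_
    refine one_sub_mul_mul_one_sub_mul_eq_of_eq_two_div ?_
      (div_nonneg (sq_nonneg _) (mul_pos (hself hq0) (hself hG)).le) ?_
    · exact add_pos (div_pos (hpos hq0) (hself hq0)) (div_pos (hpos hG) (hself hG))
    · rw [hαk₀, mul_div_assoc]
  have hg3 : g (m + 3) = g (m + 2) - α (m + 2) • (A *ᵥ g (m + 2)) := hrec (m + 2)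
  have heig := mulVec_sub_smul_mulVec_eq_smul_of_det_eq_zero hdet (g (m + 2))
  rw [← hg3] at heig
  have hμ : A.trace - (α (m + 2))⁻¹ ≠ 0 := by
    intro h
    have := hpos (hgne (m + 3) (by omega))
    rw [heig, h, zero_smul, dotProduct_zero] at this
    exact this.false
  have hg4 : g (m + 4) = g (m + 3) - α (m + 3) • (A *ᵥ g (m + 3)) := hrec (m + 3)
  have hα4 : α (m + 4) = bb1Step A (g (m + 3)) := hstep (m + 4) (by omega) (by omega) (by omega)
  rw [show m + 2 + 3 = m + 4 + 1 from rfl, hrec (m + 4), hα4, hg4]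
  exact sub_bb1Step_smul_eq_zero_of_mulVec_eq_smul heig hμ
    (hself (hgne (m + 3) (by omega))).ne' _
end

section
/- Let A be a 2×2 real symmetric positive definite matrix and let k₀ ≥ 2 be an integer. Let g : ℕ → ℝ² and α : ℕ → ℝ satisfy g_{j+1} = (I − α_j A)g_j for all j, with the BB2 stepsize α_j = ⟨g_{j-1}, A g_{j-1}⟩/⟨g_{j-1}, A² g_{j-1}⟩ for every j with 1 ≤ j ≤ k₀+2 and j ≠ k₀ (α₀ arbitrary). Suppose g_j ≠ 0 for all 0 ≤ j ≤ k₀+2, and let q ∈ ℝ², q ≠ 0, satisfy (I − α_{k₀-2} A)q = g_{k₀-2}. Define α̂ = ⟨q, Aq⟩/⟨q, A²q⟩, α^{MG} = ⟨g_{k₀}, A g_{k₀}⟩/⟨g_{k₀}, A² g_{k₀}⟩, Γ = 4⟨q, A² g_{k₀}⟩²/(⟨q, Aq⟩·⟨g_{k₀}, A g_{k₀}⟩), and set α_{k₀} = 2/( 1/α̂ + 1/α^{MG} + √( (1/α̂ − 1/α^{MG})² + Γ ) ). Then g_{k₀+3} = 0. -/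
/-!
Gradient steps `x ↦ (I - α A) x` commute and are self-adjoint for the `A`-inner product, and a
BB2 step makes the new gradient `A`-orthogonal to the one its stepsize was computed from. Since
`g_{k₀-2} = (I - α_{k₀-2} A) q`, `g_{k₀-1} = (I - α_{k₀-2} A) g_{k₀-2}` and `α_{k₀-1}` is the BB2
stepsize of `g_{k₀-2}`, it follows that `g_{k₀}` is `A`-orthogonal to `q`. In the plane `q` and
`g_{k₀}` then form a basis, and the inserted stepsize is the reciprocal of the larger Ritz value of
`A` on their span, i.e. of an eigenvalue of `A`: `I - α_{k₀} A` is singular. So `g_{k₀+1}` is an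
eigenvector, `g_{k₀+2}` is a multiple of it, and the BB2 stepsize `α_{k₀+2}` computed from
`g_{k₀+1}` is the reciprocal of its eigenvalue, which annihilates `g_{k₀+2}`.
-/

open Matrix

/-- `1 / a` is the larger root of `(t - u) * (t - v) = W`. -/
lemma one_sub_mul_mul_one_sub_mul_eq {u v W a : ℝ} (huv : 0 < u + v) (hW : 0 ≤ W)
    (ha : a = 2 / (u + v + √((u - v) ^ 2 + 4 * W))) :
    (1 - a * u) * (1 - a * v) = a ^ 2 * W := by
  have hS := Real.sq_sqrt (by positivity : 0 ≤ (u - v) ^ 2 + 4 * W)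
  have hT : 0 < u + v + √((u - v) ^ 2 + 4 * W) := by positivity
  rw [ha]
  field_simp
  linear_combination hS

lemma mul_sub_mul_eq_sq {a b c d X α : ℝ} (ha : 0 < a) (hb : 0 < b) (hc : 0 < c) (hd : 0 < d)
    (hα : α = 2 / (b / a + d / c + √((b / a - d / c) ^ 2 + 4 * X ^ 2 / (a * c)))) :
    (a - α * b) * (c - α * d) = α ^ 2 * X ^ 2 := by
  rw [mul_div_assoc] at hα
  have h := one_sub_mul_mul_one_sub_mul_eq (by positivity) (by positivity) hα
  field_simp at h
  linear_combination h

section GradientStep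

variable {n : Type*} [Fintype n] {A : Matrix n n ℝ}

def gradStep (A : Matrix n n ℝ) (α : ℝ) (x : n → ℝ) : n → ℝ :=
  x - α • (A *ᵥ x)

noncomputable def bb2Stepsize (A : Matrix n n ℝ) (x : n → ℝ) : ℝ :=
  (x ⬝ᵥ (A *ᵥ x)) / (x ⬝ᵥ (A *ᵥ (A *ᵥ x)))

@[simp]
lemma gradStep_zero (α : ℝ) : gradStep A α 0 = 0 := by
  simp [gradStep]

lemma gradStep_comm (α β : ℝ) (x : n → ℝ) :
    gradStep A α (gradStep A β x) = gradStep A β (gradStep A α x) := by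
  simp only [gradStep, mulVec_sub, mulVec_smul]
  module

lemma dotProduct_mulVec_gradStep (α : ℝ) (x y : n → ℝ) :
    x ⬝ᵥ (A *ᵥ gradStep A α y) = x ⬝ᵥ (A *ᵥ y) - α * (x ⬝ᵥ (A *ᵥ (A *ᵥ y))) := by
  simp only [gradStep, mulVec_sub, mulVec_smul, dotProduct_sub, dotProduct_smul, smul_eq_mul]

lemma Matrix.IsSymm.dotProduct_mulVec_comm_s4 (hA : A.IsSymm) (x y : n → ℝ) :
    x ⬝ᵥ (A *ᵥ y) = y ⬝ᵥ (A *ᵥ x) := by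
  rw [dotProduct_mulVec, ← mulVec_transpose, hA.eq, dotProduct_comm]

lemma Matrix.IsSymm.gradStep_dotProduct_mulVec (hA : A.IsSymm) (α : ℝ) (x y : n → ℝ) :
    gradStep A α x ⬝ᵥ (A *ᵥ y) = x ⬝ᵥ (A *ᵥ gradStep A α y) := by
  rw [hA.dotProduct_mulVec_comm_s4, dotProduct_mulVec_gradStep, dotProduct_mulVec_gradStep,
    hA.dotProduct_mulVec_comm_s4 y x, hA.dotProduct_mulVec_comm_s4 y (A *ᵥ x),
    hA.dotProduct_mulVec_comm_s4 x (A *ᵥ y), dotProduct_comm (A *ᵥ x)]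

lemma Matrix.IsSymm.gradStep_bb2Stepsize_dotProduct_mulVec_self (hA : A.IsSymm) (x : n → ℝ) :
    gradStep A (bb2Stepsize A x) x ⬝ᵥ (A *ᵥ x) = 0 := by
  rw [hA.gradStep_dotProduct_mulVec, dotProduct_mulVec_gradStep, bb2Stepsize]
  by_cases hAx : A *ᵥ x = 0
  · simp [hAx]
  have hD : x ⬝ᵥ (A *ᵥ (A *ᵥ x)) ≠ 0 := by
    rw [hA.dotProduct_mulVec_comm_s4]
    exact fun h => hAx (dotProduct_self_eq_zero.mp h)
  field_simp
  ring

lemma Matrix.IsSymm.gradStep_bb2Stepsize_gradStep_dotProduct_mulVec (hA : A.IsSymm) {μ : ℝ}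
    {p q : n → ℝ} (hp : gradStep A μ q = p) :
    gradStep A (bb2Stepsize A p) (gradStep A μ p) ⬝ᵥ (A *ᵥ q) = 0 := by
  rw [gradStep_comm, hA.gradStep_dotProduct_mulVec, hp,
    hA.gradStep_bb2Stepsize_dotProduct_mulVec_self]

end GradientStep

section PosDef

variable {n : Type*} [Fintype n] {A : Matrix n n ℝ}

lemma Matrix.PosDef.dotProduct_mulVec_pos' (hA : A.PosDef) {x : n → ℝ} (hx : x ≠ 0) :
    0 < x ⬝ᵥ (A *ᵥ x) := by
  simpa using hA.dotProduct_mulVec_pos hx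

lemma Matrix.PosDef.dotProduct_mulVec_mulVec_pos (hA : A.PosDef) {x : n → ℝ} (hx : x ≠ 0) :
    0 < x ⬝ᵥ (A *ᵥ (A *ᵥ x)) := by
  have hAx : A *ᵥ x ≠ 0 := fun h => by simpa [h] using hA.dotProduct_mulVec_pos' hx
  rw [(isHermitian_iff_isSymm.mp hA.1).dotProduct_mulVec_comm_s4]
  simpa using dotProduct_star_self_pos_iff.mpr hAx

lemma Matrix.PosDef.linearIndependent_pair (hA : A.PosDef) {x y : n → ℝ} (hx : x ≠ 0)
    (hy : y ≠ 0) (hxy : y ⬝ᵥ (A *ᵥ x) = 0) : LinearIndependent ℝ ![x, y] := by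
  refine LinearIndependent.pair_iff.mpr fun s t hst => ?_
  have hs : s * (x ⬝ᵥ (A *ᵥ x)) = 0 := by
    simpa [add_dotProduct, smul_dotProduct, hxy] using congrArg (· ⬝ᵥ (A *ᵥ x)) hst
  have hs : s = 0 := (mul_eq_zero.mp hs).resolve_right (hA.dotProduct_mulVec_pos' hx).ne'
  subst hs
  exact ⟨rfl, by simpa [hy] using hst⟩

lemma Matrix.PosDef.gradStep_bb2Stepsize_self_eq_zero (hA : A.PosDef) {w : n → ℝ} {μ : ℝ}
    (hw : A *ᵥ w = μ • w) : gradStep A (bb2Stepsize A w) w = 0 := by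
  by_cases hw0 : w = 0
  · simp [hw0, gradStep]
  have hμ : μ ≠ 0 := by
    rintro rfl
    simpa [hw] using hA.dotProduct_mulVec_pos' hw0
  have hww : w ⬝ᵥ w ≠ 0 := fun h => hw0 (dotProduct_self_eq_zero.mp h)
  have hbb2 : bb2Stepsize A w * μ = 1 := by
    simp only [bb2Stepsize, hw, mulVec_smul, dotProduct_smul, smul_eq_mul]
    field_simp
  simp only [gradStep, hw, smul_smul, hbb2, one_smul, sub_self]

end PosDef

section FinTwo

lemma det_gram_fin_two {R : Type*} [CommRing R] (M : Matrix (Fin 2) (Fin 2) R) (x y : Fin 2 → R) :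
    (x ⬝ᵥ (M *ᵥ x)) * (y ⬝ᵥ (M *ᵥ y)) - (x ⬝ᵥ (M *ᵥ y)) * (y ⬝ᵥ (M *ᵥ x)) =
      M.det * (of ![x, y]).det ^ 2 := by
  simp only [dotProduct, mulVec, Fin.sum_univ_two, det_fin_two, of_apply, cons_val_zero,
    cons_val_one]
  ring

lemma det_one_sub_smul_eq_zero_of_det_gram_eq_zero {A : Matrix (Fin 2) (Fin 2) ℝ} (hA : A.det ≠ 0)
    {α : ℝ} {x y : Fin 2 → ℝ} (hxy : LinearIndependent ℝ ![x, y])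
    (h : (x ⬝ᵥ (A *ᵥ gradStep A α x)) * (y ⬝ᵥ (A *ᵥ gradStep A α y)) =
      (x ⬝ᵥ (A *ᵥ gradStep A α y)) * (y ⬝ᵥ (A *ᵥ gradStep A α x))) :
    (1 - α • A).det = 0 := by
  have hM : ∀ z, A *ᵥ gradStep A α z = (A * (1 - α • A)) *ᵥ z := fun z => by
    simp [gradStep, ← mulVec_mulVec, sub_mulVec, smul_mulVec]
  have hP : (of ![x, y]).det ≠ 0 :=
    (isUnit_iff_isUnit_det _).mp (linearIndependent_rows_iff_isUnit.mp hxy) |>.ne_zero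
  have := det_gram_fin_two (A * (1 - α • A)) x y
  simp only [← hM, h, sub_self, det_mul] at this
  simpa [hA, hP] using this.symm

lemma exists_mulVec_gradStep_eq_smul_of_det_eq_zero {A : Matrix (Fin 2) (Fin 2) ℝ} {α : ℝ}
    (h : (1 - α • A).det = 0) (x : Fin 2 → ℝ) :
    ∃ μ : ℝ, A *ᵥ gradStep A α x = μ • gradStep A α x := by
  have hα : α ≠ 0 := by rintro rfl; simp at h
  simp only [det_fin_two, Matrix.sub_apply, Matrix.smul_apply, one_apply_eq,
    one_apply_ne zero_ne_one, one_apply_ne one_ne_zero, smul_eq_mul] at h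
  refine ⟨(α * A.trace - 1) / α, funext (Fin.forall_fin_two.mpr ⟨?_, ?_⟩)⟩ <;>
    simp only [gradStep, mulVec, dotProduct, Fin.sum_univ_two, Pi.sub_apply, Pi.smul_apply,
      smul_eq_mul, trace_fin_two] <;>
    field_simp
  · linear_combination (x 0) * h
  · linear_combination (x 1) * h

/-- For `A`-orthogonal `x, y`, `hα` says that `1 / α` is a Ritz value of `A` on `span {x, y}`
with respect to the `A`-inner product; in the plane this span is everything. -/
lemma Matrix.PosDef.det_one_sub_smul_eq_zero_of_orthogonal {A : Matrix (Fin 2) (Fin 2) ℝ}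
    (hA : A.PosDef) {α : ℝ} {x y : Fin 2 → ℝ} (hx : x ≠ 0) (hy : y ≠ 0)
    (hxy : y ⬝ᵥ (A *ᵥ x) = 0)
    (hα : (x ⬝ᵥ (A *ᵥ x) - α * (x ⬝ᵥ (A *ᵥ (A *ᵥ x)))) *
        (y ⬝ᵥ (A *ᵥ y) - α * (y ⬝ᵥ (A *ᵥ (A *ᵥ y)))) = α ^ 2 * (x ⬝ᵥ (A *ᵥ (A *ᵥ y))) ^ 2) :
    (1 - α • A).det = 0 := by
  have hsymm : A.IsSymm := isHermitian_iff_isSymm.mp hA.1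
  refine det_one_sub_smul_eq_zero_of_det_gram_eq_zero hA.det_pos.ne'
    (hA.linearIndependent_pair hx hy hxy) ?_
  have hyx : x ⬝ᵥ (A *ᵥ y) = 0 := by rw [hsymm.dotProduct_mulVec_comm_s4, hxy]
  have hyAx : y ⬝ᵥ (A *ᵥ (A *ᵥ x)) = x ⬝ᵥ (A *ᵥ (A *ᵥ y)) := by
    rw [hsymm.dotProduct_mulVec_comm_s4 y, hsymm.dotProduct_mulVec_comm_s4 x, dotProduct_comm]
  rw [dotProduct_mulVec_gradStep, dotProduct_mulVec_gradStep, dotProduct_mulVec_gradStep,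
    dotProduct_mulVec_gradStep, hyx, hxy, hyAx]
  linear_combination hα

end FinTwo

/-- Theorem 1 specialized to `Ψ(A) = A` (the BB2 method) with the inserted
stepsize `α̃_{k₀}^{BB2}` of (newsbb2): finite termination `g_{k₀+3} = 0`. -/
theorem finite_termination_BB2 {A : Matrix (Fin 2) (Fin 2) ℝ}
    (hA : A.PosDef) (k₀ : ℕ) (hk₀ : 2 ≤ k₀)
    (g : ℕ → Fin 2 → ℝ) (α : ℕ → ℝ)
    (hrec : ∀ j, g (j + 1) = g j - α j • (A *ᵥ g j))
    (hstep : ∀ j, 1 ≤ j → j ≤ k₀ + 2 → j ≠ k₀ →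
      α j = (g (j - 1) ⬝ᵥ (A *ᵥ g (j - 1))) /
        (g (j - 1) ⬝ᵥ (A *ᵥ (A *ᵥ g (j - 1)))))
    (hgne : ∀ j, j ≤ k₀ + 2 → g j ≠ 0)
    (q : Fin 2 → ℝ) (hq0 : q ≠ 0)
    (hq : q - α (k₀ - 2) • (A *ᵥ q) = g (k₀ - 2))
    (αhat αMG Γ : ℝ)
    (hαhat : αhat = (q ⬝ᵥ (A *ᵥ q)) / (q ⬝ᵥ (A *ᵥ (A *ᵥ q))))
    (hαMG : αMG = (g k₀ ⬝ᵥ (A *ᵥ g k₀)) / (g k₀ ⬝ᵥ (A *ᵥ (A *ᵥ g k₀))))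
    (hΓ : Γ = 4 * (q ⬝ᵥ (A *ᵥ (A *ᵥ g k₀))) ^ 2 /
      ((q ⬝ᵥ (A *ᵥ q)) * (g k₀ ⬝ᵥ (A *ᵥ g k₀))))
    (hαk₀ : α k₀ = 2 /
      (1 / αhat + 1 / αMG + Real.sqrt ((1 / αhat - 1 / αMG) ^ 2 + Γ))) :
    g (k₀ + 3) = 0 := by
  obtain ⟨k, rfl⟩ : ∃ k, k₀ = k + 2 := ⟨k₀ - 2, by omega⟩
  have hrec' : ∀ j, g (j + 1) = gradStep A (α j) (g j) := hrec
  have hα₁ : α (k + 1) = bb2Stepsize A (g k) :=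
    hstep (k + 1) (by omega) (by omega) (by omega)
  have hα₄ : α (k + 4) = bb2Stepsize A (g (k + 3)) :=
    hstep (k + 4) (by omega) (by omega) (by omega)
  have hq' : gradStep A (α k) q = g k := hq
  have hG : g (k + 2) ≠ 0 := hgne (k + 2) (by omega)
  have horth : g (k + 2) ⬝ᵥ (A *ᵥ q) = 0 := by
    rw [hrec', hrec', hα₁]
    exact (isHermitian_iff_isSymm.mp hA.1).gradStep_bb2Stepsize_gradStep_dotProduct_mulVec hq'
  have hquad := mul_sub_mul_eq_sq (X := q ⬝ᵥ (A *ᵥ (A *ᵥ g (k + 2)))) (α := α (k + 2))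
    (hA.dotProduct_mulVec_pos' hq0) (hA.dotProduct_mulVec_mulVec_pos hq0)
    (hA.dotProduct_mulVec_pos' hG) (hA.dotProduct_mulVec_mulVec_pos hG)
    (by rw [hαk₀, hαhat, hαMG, hΓ, one_div_div, one_div_div])
  have hdet := hA.det_one_sub_smul_eq_zero_of_orthogonal hq0 hG horth hquad
  obtain ⟨μ, hμ⟩ := exists_mulVec_gradStep_eq_smul_of_det_eq_zero hdet (g (k + 2))
  rw [← hrec'] at hμ
  calc g (k + 2 + 3)
      = gradStep A (α (k + 3)) (gradStep A (bb2Stepsize A (g (k + 3))) (g (k + 3))) := by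
        rw [hrec', hrec', hα₄, gradStep_comm]
    _ = 0 := by rw [hA.gradStep_bb2Stepsize_self_eq_zero hμ, gradStep_zero]
end

section
/- Let A be a 2×2 real symmetric positive definite matrix and let k₀ ≥ 2 be an integer. For each j with 1 ≤ j ≤ k₀+2 and j ≠ k₀, let M_j be a 2×2 real symmetric positive definite matrix with M_j A = A M_j, and write M = M_{k₀-1}. Let g : ℕ → ℝ² and α : ℕ → ℝ satisfy g_{j+1} = (I − α_j A)g_j for all j, with α_j = ⟨g_{j-1}, M_j g_{j-1}⟩/⟨g_{j-1}, M_j A g_{j-1}⟩ for every j with 1 ≤ j ≤ k₀+2 and j ≠ k₀ (α₀ arbitrary). Suppose g_j ≠ 0 for all 0 ≤ j ≤ k₀+2, and let q ∈ ℝ², q ≠ 0, satisfy (I − α_{k₀-2} A)q = g_{k₀-2}. Define H₁₁ = ⟨Mq, A(Mq)⟩/‖Mq‖², H₁₂ = ⟨Mq, A g_{k₀}⟩/(‖Mq‖·‖g_{k₀}‖), H₂₂ = ⟨g_{k₀}, A g_{k₀}⟩/‖g_{k₀}‖², and set α_{k₀} = 2/((H₁₁+H₂₂) + √((H₁₁−H₂₂)²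 + 4H₁₂²)). Then g_{k₀+3} = 0. -/
/-!
The lagged stepsize of iteration `k₀ - 1` makes `M q` orthogonal to `g k₀`. In the plane these
two vectors form an orthogonal basis, and `H₁₁, H₁₂, H₂₂` are the entries of the matrix of `A` in
the normalized basis, which has the trace and the determinant of `A`. Hence `α k₀` is the inverse
of the larger eigenvalue of `A`, and by Cayley–Hamilton `g (k₀ + 1)` is an eigenvector for the
smaller eigenvalue `μ`. The gradients stay in that eigenspace, the stepsize computed from
`g (k₀ + 1)` is `μ⁻¹`, and the step using it annihilates the gradient.
-/

open Matrix

open scoped MatrixOrder ComplexOrder in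
theorem Matrix.PosDef.mul_of_commute_s6 {n 𝕜 : Type*} [Fintype n] [DecidableEq n] [RCLike 𝕜]
    {M A : Matrix n n 𝕜} (hM : M.PosDef) (hA : A.PosDef) (h : M * A = A * M) :
    (M * A).PosDef :=
  ((hM.isStrictlyPositive.commute_iff hA.isStrictlyPositive).mp h).posDef

theorem Matrix.PosDef.isSymm {n : Type*} {B : Matrix n n ℝ} (hB : B.PosDef) : B.IsSymm :=
  isHermitian_iff_isSymm.mp hB.isHermitian

section Real

variable {n : Type*} [Fintype n] {A B : Matrix n n ℝ}

theorem Matrix.PosDef.dotProduct_mulVec_pos_real (hB : B.PosDef) {x : n → ℝ} (hx : x ≠ 0) :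
    0 < x ⬝ᵥ (B *ᵥ x) := by
  simpa using hB.dotProduct_mulVec_pos hx

theorem Matrix.IsSymm.mulVec_dotProduct (hB : B.IsSymm) (x y : n → ℝ) :
    (B *ᵥ x) ⬝ᵥ y = x ⬝ᵥ (B *ᵥ y) := by
  rw [dotProduct_mulVec, ← vecMul_transpose, hB.eq]

theorem Matrix.mulVec_sub_inv_smul_mulVec_eq_smul [DecidableEq n] {l m : ℝ}
    (hA : A * A = (l + m) • A - (l * m) • 1) (hl : l ≠ 0) (x : n → ℝ) :
    A *ᵥ (x - l⁻¹ • (A *ᵥ x)) = m • (x - l⁻¹ • (A *ᵥ x)) := by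
  rw [mulVec_sub, mulVec_smul, mulVec_mulVec, hA, sub_mulVec, smul_mulVec, smul_mulVec,
    one_mulVec]
  match_scalars <;> field_simp
  ring

theorem Matrix.PosDef.div_dotProduct_mulVec_eq_inv {M : Matrix n n ℝ} (hM : M.PosDef)
    {x : n → ℝ} (hx : x ≠ 0) {m : ℝ} (hAx : A *ᵥ x = m • x) :
    x ⬝ᵥ (M *ᵥ x) / (x ⬝ᵥ (M *ᵥ (A *ᵥ x))) = m⁻¹ := by
  rw [hAx, mulVec_smul, dotProduct_smul, smul_eq_mul,
    div_mul_cancel_right₀ (hM.dotProduct_mulVec_pos_real hx).ne']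

variable {g : ℕ → n → ℝ} {α : ℕ → ℝ}

/-- `I - α j • A` is self-adjoint and commutes with `B`, so `⟪B q, g (j + 2)⟫` equals
`⟪B g j, (I - α (j + 1) • A) g j⟫`, which the lagged stepsize `α (j + 1)` makes vanish. -/
theorem dotProduct_eq_zero_of_lagged_step (hA : A.IsSymm) (hB : B.IsSymm)
    (hBA : B * A = A * B) (hrec : ∀ j, g (j + 1) = g j - α j • (A *ᵥ g j)) {j : ℕ}
    {q : n → ℝ} (hq : q - α j • (A *ᵥ q) = g j) (hD : g j ⬝ᵥ (B *ᵥ (A *ᵥ g j)) ≠ 0)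
    (hα : α (j + 1) = g j ⬝ᵥ (B *ᵥ g j) / (g j ⬝ᵥ (B *ᵥ (A *ᵥ g j)))) :
    (B *ᵥ q) ⬝ᵥ g (j + 2) = 0 := by
  have hcomm (y : n → ℝ) : B *ᵥ (A *ᵥ y) = A *ᵥ (B *ᵥ y) := by
    rw [mulVec_mulVec, mulVec_mulVec, hBA]
  have htwo : (B *ᵥ q) ⬝ᵥ g (j + 2) =
      g j ⬝ᵥ (B *ᵥ g j) - α (j + 1) * (g j ⬝ᵥ (B *ᵥ (A *ᵥ g j))) := by
    rw [hrec, hrec, ← hq]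
    simp only [mulVec_sub, mulVec_smul, hcomm, dotProduct_sub, sub_dotProduct,
      dotProduct_smul, smul_dotProduct, smul_eq_mul, hA.mulVec_dotProduct, hB.mulVec_dotProduct]
  rw [htwo, hα, div_mul_cancel₀ _ hD, sub_self]

theorem eq_zero_of_mulVec_eq_smul (hrec : ∀ j, g (j + 1) = g j - α j • (A *ᵥ g j)) {j : ℕ}
    {m : ℝ} (hm : m ≠ 0) (hg : A *ᵥ g j = m • g j) (hα : α (j + 1) = m⁻¹) :
    g (j + 2) = 0 := by
  have h1 : g (j + 1) = (1 - α j * m) • g j := by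
    rw [hrec, hg, smul_smul, sub_smul, one_smul]
  rw [hrec, h1, mulVec_smul, hg, hα, smul_comm (1 - α j * m) m, inv_smul_smul₀ hm, sub_self]

end Real

theorem Matrix.mul_self_fin_two (S : Matrix (Fin 2) (Fin 2) ℝ) :
    S * S = S.trace • S - S.det • 1 := by
  have := S.aeval_self_charpoly
  simp only [charpoly_fin_two, map_add, map_sub, Polynomial.aeval_X, map_mul,
    Polynomial.aeval_C, Algebra.algebraMap_eq_smul_one, smul_mul_assoc, one_mul, sq] at this
  rw [← sub_eq_zero, ← this]
  abel

section FinTwo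

variable {S : Matrix (Fin 2) (Fin 2) ℝ} {u v : Fin 2 → ℝ}

theorem Matrix.trace_fin_two_eq_of_dotProduct_eq_zero (hu : u ≠ 0) (hv : v ≠ 0)
    (huv : u ⬝ᵥ v = 0) :
    S.trace = u ⬝ᵥ (S *ᵥ u) / (u ⬝ᵥ u) + v ⬝ᵥ (S *ᵥ v) / (v ⬝ᵥ v) := by
  have hu' : u ⬝ᵥ u ≠ 0 := dotProduct_self_eq_zero.not.mpr hu
  have hv' : v ⬝ᵥ v ≠ 0 := dotProduct_self_eq_zero.not.mpr hv
  rw [div_add_div _ _ hu' hv', eq_div_iff (mul_ne_zero hu' hv')]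
  simp only [dotProduct, mulVec, Fin.sum_univ_two, trace_fin_two] at huv ⊢
  linear_combination ((S 1 1 - S 0 0) * (u 0 * v 0 - u 1 * v 1)
    - (S 0 1 + S 1 0) * (u 0 * v 1 + u 1 * v 0)) * huv

theorem Matrix.IsSymm.det_fin_two_eq_of_dotProduct_eq_zero (hS : S.IsSymm) (hu : u ≠ 0)
    (hv : v ≠ 0) (huv : u ⬝ᵥ v = 0) :
    S.det = u ⬝ᵥ (S *ᵥ u) / (u ⬝ᵥ u) * (v ⬝ᵥ (S *ᵥ v) / (v ⬝ᵥ v)) -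
      (u ⬝ᵥ (S *ᵥ v)) ^ 2 / ((u ⬝ᵥ u) * (v ⬝ᵥ v)) := by
  have hu' : u ⬝ᵥ u ≠ 0 := dotProduct_self_eq_zero.not.mpr hu
  have hv' : v ⬝ᵥ v ≠ 0 := dotProduct_self_eq_zero.not.mpr hv
  have hSuv : v ⬝ᵥ (S *ᵥ u) = u ⬝ᵥ (S *ᵥ v) := by
    rw [dotProduct_comm, hS.mulVec_dotProduct]
  rw [sq]
  nth_rewrite 2 [← hSuv]
  rw [div_mul_div_comm, div_sub_div_same, eq_div_iff (mul_ne_zero hu' hv')]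
  simp only [dotProduct, mulVec, Fin.sum_univ_two, det_fin_two] at huv ⊢
  -- `(u ⬝ᵥ S u)(v ⬝ᵥ S v) - (u ⬝ᵥ S v)(v ⬝ᵥ S u) = det S · det [u v]²` for all `u, v`.
  linear_combination (S 0 0 * S 1 1 - S 0 1 * S 1 0) * (u 0 * v 0 + u 1 * v 1) * huv

theorem Matrix.IsSymm.discr_fin_two_eq_of_dotProduct_eq_zero (hS : S.IsSymm) (hu : u ≠ 0)
    (hv : v ≠ 0) (huv : u ⬝ᵥ v = 0) :
    (u ⬝ᵥ (S *ᵥ u) / (u ⬝ᵥ u) - v ⬝ᵥ (S *ᵥ v) / (v ⬝ᵥ v)) ^ 2 +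
      4 * (u ⬝ᵥ (S *ᵥ v) / (√(u ⬝ᵥ u) * √(v ⬝ᵥ v))) ^ 2 =
      S.trace ^ 2 - 4 * S.det := by
  rw [div_pow, mul_pow, Real.sq_sqrt (by simpa using dotProduct_self_star_nonneg u),
    Real.sq_sqrt (by simpa using dotProduct_self_star_nonneg v),
    trace_fin_two_eq_of_dotProduct_eq_zero hu hv huv,
    hS.det_fin_two_eq_of_dotProduct_eq_zero hu hv huv]
  ring

theorem Matrix.IsSymm.trace_sq_sub_four_mul_det_nonneg (hS : S.IsSymm) :
    0 ≤ S.trace ^ 2 - 4 * S.det := by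
  have h10 : S 1 0 = S 0 1 := hS.apply 0 1
  rw [trace_fin_two, det_fin_two, h10]
  nlinarith [sq_nonneg (S 0 0 - S 1 1), sq_nonneg (S 0 1)]

theorem Matrix.PosDef.sqrt_trace_sq_sub_four_mul_det_lt_trace (hS : S.PosDef) :
    √(S.trace ^ 2 - 4 * S.det) < S.trace :=
  (Real.sqrt_lt' hS.trace_pos).mpr (by linarith [hS.det_pos])

/-- The step `2 / (tr S + √(tr S² - 4 det S))` is the inverse of the larger eigenvalue, so it
maps every vector into the eigenspace of the smaller one. -/
theorem Matrix.PosDef.mulVec_sub_smul_mulVec_fin_two (hS : S.PosDef) (x : Fin 2 → ℝ) :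
    S *ᵥ (x - (2 / (S.trace + √(S.trace ^ 2 - 4 * S.det))) • (S *ᵥ x)) =
      ((S.trace - √(S.trace ^ 2 - 4 * S.det)) / 2) •
        (x - (2 / (S.trace + √(S.trace ^ 2 - 4 * S.det))) • (S *ᵥ x)) := by
  set s := √(S.trace ^ 2 - 4 * S.det)
  have hs : s ^ 2 = S.trace ^ 2 - 4 * S.det :=
    Real.sq_sqrt hS.isSymm.trace_sq_sub_four_mul_det_nonneg
  have hl : (S.trace + s) / 2 ≠ 0 := by
    have := hS.trace_pos
    positivity
  have hsum : (S.trace + s) / 2 + (S.trace - s) / 2 = S.trace := by ring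
  have hprod : (S.trace + s) / 2 * ((S.trace - s) / 2) = S.det := by
    linear_combination -hs / 4
  rw [show 2 / (S.trace + s) = ((S.trace + s) / 2)⁻¹ by rw [inv_div]]
  refine mulVec_sub_inv_smul_mulVec_eq_smul ?_ hl x
  rw [hsum, hprod, mul_self_fin_two]

end FinTwo

/-- Theorem 2 (generalized finite termination with varying `Ψ`), instance `r = 1`:
each iteration `j ≠ k₀` may use a different symmetric positive definite matrix
`M j` commuting with `A`; inserting the new stepsize built from `M (k₀ - 1)`
at iteration `k₀` gives `g_{k₀+3} = 0`. -/
theorem generalized_finite_termination {A : Matrix (Fin 2) (Fin 2) ℝ}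
    (hA : A.PosDef) (k₀ : ℕ) (hk₀ : 2 ≤ k₀)
    (M : ℕ → Matrix (Fin 2) (Fin 2) ℝ)
    (hM : ∀ j, 1 ≤ j → j ≤ k₀ + 2 → j ≠ k₀ →
      (M j).PosDef ∧ M j * A = A * M j)
    (g : ℕ → Fin 2 → ℝ) (α : ℕ → ℝ)
    (hrec : ∀ j, g (j + 1) = g j - α j • (A *ᵥ g j))
    (hstep : ∀ j, 1 ≤ j → j ≤ k₀ + 2 → j ≠ k₀ →
      α j = (g (j - 1) ⬝ᵥ (M j *ᵥ g (j - 1))) /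
        (g (j - 1) ⬝ᵥ (M j *ᵥ (A *ᵥ g (j - 1)))))
    (hgne : ∀ j, j ≤ k₀ + 2 → g j ≠ 0)
    (q : Fin 2 → ℝ) (hq0 : q ≠ 0)
    (hq : q - α (k₀ - 2) • (A *ᵥ q) = g (k₀ - 2))
    (H₁₁ H₁₂ H₂₂ : ℝ)
    (hH₁₁ : H₁₁ = ((M (k₀ - 1) *ᵥ q) ⬝ᵥ (A *ᵥ (M (k₀ - 1) *ᵥ q))) /
      ((M (k₀ - 1) *ᵥ q) ⬝ᵥ (M (k₀ - 1) *ᵥ q)))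
    (hH₁₂ : H₁₂ = ((M (k₀ - 1) *ᵥ q) ⬝ᵥ (A *ᵥ g k₀)) /
      (Real.sqrt ((M (k₀ - 1) *ᵥ q) ⬝ᵥ (M (k₀ - 1) *ᵥ q)) *
        Real.sqrt (g k₀ ⬝ᵥ g k₀)))
    (hH₂₂ : H₂₂ = (g k₀ ⬝ᵥ (A *ᵥ g k₀)) / (g k₀ ⬝ᵥ g k₀))
    (hαk₀ : α k₀ = 2 / ((H₁₁ + H₂₂) + Real.sqrt ((H₁₁ - H₂₂) ^ 2 + 4 * H₁₂ ^ 2))) :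
    g (k₀ + 3) = 0 := by
  obtain ⟨n, rfl⟩ : ∃ n, k₀ = n + 2 := ⟨k₀ - 2, by omega⟩
  rw [show n + 2 - 2 = n by omega] at hq
  rw [show n + 2 - 1 = n + 1 by omega] at hH₁₁ hH₁₂
  obtain ⟨hB, hBA⟩ := hM (n + 1) (by omega) (by omega) (by omega)
  have hu : M (n + 1) *ᵥ q ≠ 0 := fun h ↦
    (hB.dotProduct_mulVec_pos_real hq0).ne' (by rw [h, dotProduct_zero])
  set u := M (n + 1) *ᵥ q
  have hv : g (n + 2) ≠ 0 := hgne (n + 2) (by omega)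
  have huv : u ⬝ᵥ g (n + 2) = 0 := by
    refine dotProduct_eq_zero_of_lagged_step hA.isSymm hB.isSymm hBA hrec hq ?_ ?_
    · rw [mulVec_mulVec]
      exact ((hB.mul_of_commute_s6 hA hBA).dotProduct_mulVec_pos_real
        (hgne n (by omega))).ne'
    · exact hstep (n + 1) (by omega) (by omega) (by omega)
  have htr : H₁₁ + H₂₂ = A.trace := by
    rw [hH₁₁, hH₂₂, trace_fin_two_eq_of_dotProduct_eq_zero hu hv huv]
  have hdisc : (H₁₁ - H₂₂) ^ 2 + 4 * H₁₂ ^ 2 = A.trace ^ 2 - 4 * A.det := by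
    rw [hH₁₁, hH₂₂, hH₁₂]
    exact hA.isSymm.discr_fin_two_eq_of_dotProduct_eq_zero hu hv huv
  set μ := (A.trace - √(A.trace ^ 2 - 4 * A.det)) / 2
  have hμ : 0 < μ := half_pos (sub_pos.mpr hA.sqrt_trace_sq_sub_four_mul_det_lt_trace)
  have heig : A *ᵥ g (n + 3) = μ • g (n + 3) := by
    rw [hrec, hαk₀, htr, hdisc]
    exact hA.mulVec_sub_smul_mulVec_fin_two _
  have hα : α (n + 4) = μ⁻¹ := by
    rw [hstep (n + 4) (by omega) (by omega) (by omega)]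
    exact (hM (n + 4) (by omega) (by omega) (by omega)).1.div_dotProduct_mulVec_eq_inv
      (hgne (n + 3) (by omega)) heig
  exact eq_zero_of_mulVec_eq_smul hrec hμ.ne' heig hα
end

section
/- Let H be an invertible 2×2 real matrix and α ∈ ℝ such that α² det(H) − α tr(H) + 1 = 0. Then for every ϑ ∈ ℝ², the vectors (I − αH)ϑ and H⁻¹ϑ − αϑ are parallel, i.e., linearly dependent over ℝ (equivalently, the 2×2 determinant of the matrix with these two columns vanishes). -/
open Matrix

/-!
By Cayley–Hamilton `H² = tr H • H - det H • 1`, and the quadratic relation on `α` turns this into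
`H (1 - α H) = (α det H) (1 - α H)`. Multiplying by `H⁻¹` gives `1 - α H = (α det H) (H⁻¹ - α)`,
so `(1 - α H) ϑ` is a scalar multiple of `H⁻¹ ϑ - α ϑ`.
-/

namespace Matrix

variable {R : Type*} [CommRing R] [Nontrivial R]

theorem sq_fin_two_eq (M : Matrix (Fin 2) (Fin 2) R) :
    M ^ 2 = M.trace • M - M.det • 1 := by
  have h := M.aeval_self_charpoly
  rw [charpoly_fin_two] at h
  simp only [map_add, Polynomial.aeval_sub, map_pow, Polynomial.aeval_X, map_mul,
    Polynomial.aeval_C, Algebra.algebraMap_eq_smul_one, Algebra.smul_mul_assoc, one_mul] at h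
  linear_combination (norm := module) h

theorem mul_one_sub_smul_eq_smul {M : Matrix (Fin 2) (Fin 2) R} {α : R}
    (hα : α ^ 2 * M.det - α * M.trace + 1 = 0) :
    M * (1 - α • M) = (α * M.det) • (1 - α • M) := by
  rw [mul_sub, mul_one, mul_smul_comm, ← sq, sq_fin_two_eq]
  linear_combination (norm := module) hα • M

theorem one_sub_smul_eq_smul_inv_sub {M : Matrix (Fin 2) (Fin 2) R} (hM : IsUnit M.det) {α : R}
    (hα : α ^ 2 * M.det - α * M.trace + 1 = 0) :
    1 - α • M = (α * M.det) • (M⁻¹ - α • 1) := calc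
  1 - α • M = M⁻¹ * (M * (1 - α • M)) := by
    rw [← Matrix.mul_assoc, nonsing_inv_mul _ hM, one_mul]
  _ = (α * M.det) • (M⁻¹ - α • 1) := by
    rw [mul_one_sub_smul_eq_smul hα, mul_smul_comm, mul_sub, mul_one, mul_smul_comm,
      nonsing_inv_mul _ hM]

end Matrix

/-- The parallelism claim (g2pal2): if `α² det(H) − α tr(H) + 1 = 0`, then for
every `ϑ ∈ ℝ²` the vectors `(I − αH)ϑ` and `H⁻¹ϑ − αϑ` are linearly dependent,
i.e. the determinant of the 2×2 matrix with these columns vanishes. -/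
theorem parallelism {H : Matrix (Fin 2) (Fin 2) ℝ} (hH : H.det ≠ 0)
    (α : ℝ) (hα : α ^ 2 * H.det - α * H.trace + 1 = 0)
    (ϑ : Fin 2 → ℝ) :
    (ϑ - α • (H *ᵥ ϑ)) 0 * (H⁻¹ *ᵥ ϑ - α • ϑ) 1 -
      (ϑ - α • (H *ᵥ ϑ)) 1 * (H⁻¹ *ᵥ ϑ - α • ϑ) 0 = 0 := by
  have hv : ϑ - α • (H *ᵥ ϑ) = (α * H.det) • (H⁻¹ *ᵥ ϑ - α • ϑ) := by
    simpa [sub_mulVec, smul_mulVec] using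
      congrArg (· *ᵥ ϑ) (one_sub_smul_eq_smul_inv_sub hH.isUnit hα)
  rw [hv]
  simp only [Pi.smul_apply, smul_eq_mul]
  ring
end

section
/- Let A be an n×n real symmetric positive definite matrix and let q, g ∈ ℝⁿ be nonzero. Define α̃^{BB1} = 2/( ⟨q,Aq⟩/‖q‖² + ⟨g,Ag⟩/‖g‖² + √( (⟨q,Aq⟩/‖q‖² − ⟨g,Ag⟩/‖g‖²)² + 4⟨q,Ag⟩²/(‖q‖²·‖g‖²) ) ). Then α̃^{BB1} ≤ min{ ‖g‖²/⟨g,Ag⟩ , ‖q‖²/⟨q,Aq⟩ }. -/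
open Matrix

/-- First inequality of (upbdtalp3): the stepsize `α̃^{BB1}` of (newsbb1) is
bounded above by `min { α^{SD}, ‖q‖²/⟨q,Aq⟩ }`. -/
theorem newsbb1_upper_bound {n : ℕ} {A : Matrix (Fin n) (Fin n) ℝ}
    (hA : A.PosDef) (q g : Fin n → ℝ) (hq : q ≠ 0) (hg : g ≠ 0) :
    2 / ((q ⬝ᵥ (A *ᵥ q)) / (q ⬝ᵥ q) + (g ⬝ᵥ (A *ᵥ g)) / (g ⬝ᵥ g) +
        Real.sqrt (((q ⬝ᵥ (A *ᵥ q)) / (q ⬝ᵥ q) -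
            (g ⬝ᵥ (A *ᵥ g)) / (g ⬝ᵥ g)) ^ 2 +
          4 * (q ⬝ᵥ (A *ᵥ g)) ^ 2 / ((q ⬝ᵥ q) * (g ⬝ᵥ g)))) ≤
      min ((g ⬝ᵥ g) / (g ⬝ᵥ (A *ᵥ g))) ((q ⬝ᵥ q) / (q ⬝ᵥ (A *ᵥ q))) := by
  have hqq : 0 < q ⬝ᵥ q := by
    have h0 : (0:ℝ) ≤ q ⬝ᵥ q := Finset.sum_nonneg fun i _ => mul_self_nonneg _
    rcases h0.lt_or_eq with h | h
    · exact h
    · exact absurd (dotProduct_self_eq_zero.mp h.symm) hq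
  have hgg : 0 < g ⬝ᵥ g := by
    have h0 : (0:ℝ) ≤ g ⬝ᵥ g := Finset.sum_nonneg fun i _ => mul_self_nonneg _
    rcases h0.lt_or_eq with h | h
    · exact h
    · exact absurd (dotProduct_self_eq_zero.mp h.symm) hg
  have hqA : 0 < q ⬝ᵥ (A *ᵥ q) := by simpa using hA.re_dotProduct_pos hq
  have hgA : 0 < g ⬝ᵥ (A *ᵥ g) := by simpa using hA.re_dotProduct_pos hg
  set a : ℝ := (q ⬝ᵥ (A *ᵥ q)) / (q ⬝ᵥ q) with ha
  set b : ℝ := (g ⬝ᵥ (A *ᵥ g)) / (g ⬝ᵥ g) with hb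
  have hapos : 0 < a := div_pos hqA hqq
  have hbpos : 0 < b := div_pos hgA hgg
  set s : ℝ := Real.sqrt ((a - b) ^ 2 + 4 * (q ⬝ᵥ (A *ᵥ g)) ^ 2 / ((q ⬝ᵥ q) * (g ⬝ᵥ g))) with hs
  have habs : |a - b| ≤ s := by
    rw [hs, ← Real.sqrt_sq_eq_abs]
    refine Real.sqrt_le_sqrt ?_
    have h4 : 0 ≤ 4 * (q ⬝ᵥ (A *ᵥ g)) ^ 2 / ((q ⬝ᵥ q) * (g ⬝ᵥ g)) := by positivity
    linarith
  have hstep : 2 / (a + b + s) ≤ 2 / (a + b + |a - b|) := by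
    apply div_le_div_of_nonneg_left (by norm_num) _ (by linarith)
    have : 0 ≤ |a - b| := abs_nonneg _
    linarith
  have hmax : a + b + |a - b| = 2 * max a b := by
    rcases le_total a b with h | h
    · rw [abs_of_nonpos (by linarith), max_eq_right h]; ring
    · rw [abs_of_nonneg (by linarith), max_eq_left h]; ring
  have h1 : (g ⬝ᵥ g) / (g ⬝ᵥ (A *ᵥ g)) = 1 / b := by
    rw [hb, one_div_div]
  have h2 : (q ⬝ᵥ q) / (q ⬝ᵥ (A *ᵥ q)) = 1 / a := by
    rw [ha, one_div_div]
  have hfin : 2 / (2 * max a b) = min (1 / b) (1 / a) := by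
    have hmaxpos : 0 < max a b := lt_max_of_lt_left hapos
    rcases le_total a b with h | h
    · rw [max_eq_right h, min_eq_left (by
        apply one_div_le_one_div_of_le hapos h)]
      field_simp
    · rw [max_eq_left h, min_eq_right (by
        apply one_div_le_one_div_of_le hbpos h)]
      field_simp
  calc 2 / (a + b + s) ≤ 2 / (a + b + |a - b|) := hstep
    _ = 2 / (2 * max a b) := by rw [hmax]
    _ = min (1 / b) (1 / a) := hfin
    _ = min ((g ⬝ᵥ g) / (g ⬝ᵥ (A *ᵥ g))) ((q ⬝ᵥ q) / (q ⬝ᵥ (A *ᵥ q))) := by rw [h1, h2]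
end

section
/- Let A be an n×n real symmetric positive definite matrix and let q, g ∈ ℝⁿ be nonzero. Define α̂ = ⟨q,Aq⟩/⟨q,A²q⟩, α^{MG} = ⟨g,Ag⟩/⟨g,A²g⟩, Γ = 4⟨q,A²g⟩²/(⟨q,Aq⟩·⟨g,Ag⟩), and α̃^{BB2} = 2/( 1/α̂ + 1/α^{MG} + √( (1/α̂ − 1/α^{MG})² + Γ ) ). Then α̃^{BB2} ≤ min{ α^{MG}, α̂ }. -/
open Matrix

theorem Matrix.PosDef.mul_self {n K : Type*} [Fintype n] [Field K] [PartialOrder K] [StarRing K]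
    [StarOrderedRing K] {A : Matrix n n K} (hA : A.PosDef) : (A * A).PosDef := by
  classical
  simpa only [hA.isHermitian.eq] using
    PosDef.conjTranspose_mul_self A (mulVec_injective_iff_isUnit.mpr hA.isUnit)

/-- The left side is the reciprocal of the larger root of `(t - a)(t - b) = Γ / 4`, which is at
least `a` since `Γ ≥ 0`. -/
theorem two_div_add_add_sqrt_le_inv {a : ℝ} (b : ℝ) {Γ : ℝ} (ha : 0 < a) (hΓ : 0 ≤ Γ) :
    2 / (a + b + √((a - b) ^ 2 + Γ)) ≤ a⁻¹ := by
  have hdiff : a - b ≤ √((a - b) ^ 2 + Γ) :=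
    (le_abs_self _).trans (Real.abs_le_sqrt (by linarith))
  calc 2 / (a + b + √((a - b) ^ 2 + Γ)) ≤ 2 / (2 * a) :=
        div_le_div_of_nonneg_left zero_le_two (by positivity) (by linarith)
    _ = a⁻¹ := by field_simp

theorem two_div_add_add_sqrt_le_min_inv {a b Γ : ℝ} (ha : 0 < a) (hb : 0 < b) (hΓ : 0 ≤ Γ) :
    2 / (a + b + √((a - b) ^ 2 + Γ)) ≤ min b⁻¹ a⁻¹ := by
  refine le_min ?_ (two_div_add_add_sqrt_le_inv b ha hΓ)
  rw [add_comm a, ← neg_sub b a, neg_sq]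
  exact two_div_add_add_sqrt_le_inv a hb hΓ

/-- Second inequality of (upbdtalp3): the stepsize `α̃^{BB2}` of (newsbb2) is
bounded above by `min { α^{MG}, α̂ }`. -/
theorem newsbb2_upper_bound {n : ℕ} {A : Matrix (Fin n) (Fin n) ℝ}
    (hA : A.PosDef) (q g : Fin n → ℝ) (hq : q ≠ 0) (hg : g ≠ 0)
    (αhat αMG Γ : ℝ)
    (hαhat : αhat = (q ⬝ᵥ (A *ᵥ q)) / (q ⬝ᵥ (A *ᵥ (A *ᵥ q))))
    (hαMG : αMG = (g ⬝ᵥ (A *ᵥ g)) / (g ⬝ᵥ (A *ᵥ (A *ᵥ g))))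
    (hΓ : Γ = 4 * (q ⬝ᵥ (A *ᵥ (A *ᵥ g))) ^ 2 /
      ((q ⬝ᵥ (A *ᵥ q)) * (g ⬝ᵥ (A *ᵥ g)))) :
    2 / (1 / αhat + 1 / αMG + Real.sqrt ((1 / αhat - 1 / αMG) ^ 2 + Γ)) ≤
      min αMG αhat := by
  have hqA : 0 < q ⬝ᵥ (A *ᵥ q) := by simpa using hA.dotProduct_mulVec_pos hq
  have hgA : 0 < g ⬝ᵥ (A *ᵥ g) := by simpa using hA.dotProduct_mulVec_pos hg
  have hqA2 : 0 < q ⬝ᵥ (A *ᵥ (A *ᵥ q)) := by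
    simpa [mulVec_mulVec] using hA.mul_self.dotProduct_mulVec_pos hq
  have hgA2 : 0 < g ⬝ᵥ (A *ᵥ (A *ᵥ g)) := by
    simpa [mulVec_mulVec] using hA.mul_self.dotProduct_mulVec_pos hg
  have hαhat_pos : 0 < αhat := hαhat ▸ div_pos hqA hqA2
  have hαMG_pos : 0 < αMG := hαMG ▸ div_pos hgA hgA2
  have hΓ_nonneg : 0 ≤ Γ := hΓ ▸ by positivity
  simpa only [one_div, inv_inv] using
    two_div_add_add_sqrt_le_min_inv (one_div_pos.mpr hαhat_pos) (one_div_pos.mpr hαMG_pos)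
      hΓ_nonneg
end
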